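/- arXiv:1902.05597 — 6 statements merged into one kernel-verified Lean document; each statement's English description precedes it below -/
import Mathlib

section
/- Let ℬ be a tiling of {0,1}ⁿ by boxes and let A ∈ ℬ be minimal with respect to the order A ⪯ B iff prop(A) ⊇ prop(B). If |prop(A)| ≥ 1, then there exists B ∈ ℬ with B ≠ A, prop(B) = prop(A), and |{i ∈ prop(A) : Aᵢ ≠ Bᵢ}| odd. -/
/-!
Sum the character `χ(x) = ∏ i, (if x i ∈ A i then 1 else -1)` over the cube. Since `prop A` is
nonempty, the total is `0`. Over a box `B` the sum factorizes coordinatewise: it vanishes as soon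
as `B i = {0,1}` for some `i ∈ prop A`, i.e. unless `prop A ⊆ prop B`; by minimality of `A` the
remaining boxes have `prop B = prop A`, and for them the sum is `± 2 ^ (n - |prop A|)`, the sign
being the parity of the number of coordinates of `prop A` where `A` and `B` differ. If all these
parities were even, every box would contribute `≥ 0` and `A` itself `> 0`, contradicting a zero
total.
-/

open Finset

/-- `prop` of a box `B ⊆ {0,1}ⁿ`: the coordinates where `B i ≠ {0,1}`. -/
def bProp {n : ℕ} (B : Fin n → Finset Bool) : Finset (Fin n) :=
  Finset.univ.filter (fun i => B i ≠ Finset.univ)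

theorem Finset.sum_sum_of_pairwiseDisjoint_of_cover {β γ M : Type*} [Fintype γ] [DecidableEq γ]
    [AddCommMonoid M] {ℬ : Finset β} {S : β → Finset γ}
    (hdisj : (ℬ : Set β).PairwiseDisjoint S) (hcover : ∀ x, ∃ B ∈ ℬ, x ∈ S B) (f : γ → M) :
    ∑ B ∈ ℬ, ∑ x ∈ S B, f x = ∑ x, f x := by
  rw [← sum_biUnion hdisj]
  congr
  exact eq_univ_of_forall fun x => mem_biUnion.mpr (hcover x)

theorem Finset.exists_eq_singleton_of_ne_univ_bool {s : Finset Bool} :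
    s.Nonempty → s ≠ univ → ∃ a, s = {a} := by
  revert s
  decide

section bProp

variable {n : ℕ} {A B : Fin n → Finset Bool} {i : Fin n}

theorem mem_bProp : i ∈ bProp B ↔ B i ≠ univ := by
  simp only [bProp, mem_filter, mem_univ, true_and]

theorem notMem_bProp : i ∉ bProp B ↔ B i = univ := by
  rw [mem_bProp, not_not]

def boxSign (A : Fin n → Finset Bool) (x : Fin n → Bool) : ℤ :=
  ∏ i, if x i ∈ A i then 1 else -1

theorem sum_boxSign_piFinset :
    ∑ x ∈ Fintype.piFinset B, boxSign A x = ∏ i, ∑ b ∈ B i, if b ∈ A i then 1 else -1 :=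
  (prod_univ_sum B fun i b => if b ∈ A i then 1 else -1).symm

theorem sum_boxSign_piFinset_eq_zero (hi : i ∈ bProp A) (hAi : (A i).Nonempty)
    (hBi : B i = univ) : ∑ x ∈ Fintype.piFinset B, boxSign A x = 0 := by
  obtain ⟨a, ha⟩ := exists_eq_singleton_of_ne_univ_bool hAi (mem_bProp.mp hi)
  rw [sum_boxSign_piFinset]
  refine prod_eq_zero (mem_univ i) ?_
  rw [hBi, ha]
  cases a <;> simp

theorem sum_boxSign_piFinset_of_bProp_eq (hA : ∀ i, (A i).Nonempty) (hB : ∀ i, (B i).Nonempty)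
    (hAB : bProp B = bProp A) :
    ∑ x ∈ Fintype.piFinset B, boxSign A x =
      (-1) ^ #{i ∈ bProp A | A i ≠ B i} * 2 ^ (n - #(bProp A)) := by
  have hcoord : ∀ i, (∑ b ∈ B i, if b ∈ A i then 1 else -1 : ℤ) =
      if i ∈ bProp A then (if A i = B i then 1 else -1) else 2 := by
    intro i
    by_cases hi : i ∈ bProp A
    · obtain ⟨a, ha⟩ := exists_eq_singleton_of_ne_univ_bool (hA i) (mem_bProp.mp hi)
      obtain ⟨c, hc⟩ := exists_eq_singleton_of_ne_univ_bool (hB i) (mem_bProp.mp (hAB ▸ hi))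
      simp [hi, ha, hc, eq_comm]
    · rw [if_neg hi, notMem_bProp.mp hi, notMem_bProp.mp (hAB.symm ▸ hi : i ∉ bProp B)]
      rfl
  rw [sum_boxSign_piFinset, prod_congr rfl fun i _ => hcoord i, prod_ite, prod_ite]
  simp only [prod_const_one, one_mul, prod_const, filter_mem_eq_inter, univ_inter, ne_eq,
    filter_notMem_eq_sdiff, card_univ_sdiff, Fintype.card_fin]

end bProp

theorem stmt3 (n : ℕ) (ℬ : Finset (Fin n → Finset Bool))
    (hbox : ∀ B ∈ ℬ, ∀ i, (B i).Nonempty)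
    (hdisj : ∀ B ∈ ℬ, ∀ C ∈ ℬ, B ≠ C →
      Disjoint (Fintype.piFinset B) (Fintype.piFinset C))
    (hcover : ∀ x : Fin n → Bool, ∃ B ∈ ℬ, x ∈ Fintype.piFinset B)
    (A : Fin n → Finset Bool) (hA : A ∈ ℬ)
    (hmin : ∀ B ∈ ℬ, bProp A ⊆ bProp B → bProp B = bProp A)
    (hprop : 1 ≤ (bProp A).card) :
    ∃ B ∈ ℬ, B ≠ A ∧ bProp B = bProp A ∧
      Odd ((bProp A).filter (fun i => A i ≠ B i)).card := by
  by_contra! hcon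
  obtain ⟨i, hi⟩ := card_pos.mp hprop
  have htotal : ∑ B ∈ ℬ, ∑ x ∈ Fintype.piFinset B, boxSign A x = 0 := by
    rw [sum_sum_of_pairwiseDisjoint_of_cover hdisj hcover, ← Fintype.piFinset_univ]
    exact sum_boxSign_piFinset_eq_zero hi (hbox A hA i) rfl
  have hpos : ∀ B ∈ ℬ, bProp B = bProp A → 0 < ∑ x ∈ Fintype.piFinset B, boxSign A x := by
    intro B hB hBA
    have heven : Even #{i ∈ bProp A | A i ≠ B i} := by
      rcases eq_or_ne B A with rfl | hne
      · simp
      · exact Nat.not_odd_iff_even.mp (hcon B hB hne hBA)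
    rw [sum_boxSign_piFinset_of_bProp_eq (hbox A hA) (hbox B hB) hBA, heven.neg_one_pow]
    positivity
  have hnonneg : ∀ B ∈ ℬ, 0 ≤ ∑ x ∈ Fintype.piFinset B, boxSign A x := by
    intro B hB
    by_cases hsub : bProp A ⊆ bProp B
    · exact (hpos B hB (hmin B hB hsub)).le
    · obtain ⟨j, hjA, hjB⟩ := not_subset.mp hsub
      exact (sum_boxSign_piFinset_eq_zero hjA (hbox A hA j) (notMem_bProp.mp hjB)).ge
  exact (sum_pos' hnonneg ⟨A, hA, hpos A hA rfl⟩).ne' htotal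
end

section
/- Let n ≥ 3 and let V be a set of words of length n over {0,1,*} satisfying: (α₁) every v ∈ V has exactly 2 non-star symbols; (α₂) for any distinct v,u ∈ V there is exactly one index i with {vᵢ,uᵢ} = {0,1}; (α₃) distinct words have distinct sets of non-star positions. Then |V| ≤ 3, and this bound is attained (e.g. by {00*, *10, 1*1} padded with stars). -/
open Finset

/-- The set of non-star positions of a word over `{0,1,*}` (a word is encoded as a
function `Fin n → Option Bool`, with `none` playing the role of `*`). -/
def wProp {n : ℕ} (v : Fin n → Option Bool) : Finset (Fin n) :=
  Finset.univ.filter (fun i => v i ≠ none)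

/-- Membership of a point of `{0,1}ⁿ` in the box encoded by a word. -/
def inBox {n : ℕ} (x : Fin n → Bool) (v : Fin n → Option Bool) : Prop :=
  ∀ i, ∀ b, v i = some b → x i = b

/-- Conditions (α₁)–(α₃) with parameter `k`: every word has exactly `k` non-star
symbols; any two distinct words have exactly one index `i` with `{vᵢ,uᵢ} = {0,1}`;
distinct words have distinct sets of non-star positions. -/
def Alpha {n : ℕ} (k : ℕ) (V : Finset (Fin n → Option Bool)) : Prop :=
  (∀ v ∈ V, (wProp v).card = k) ∧
  (∀ v ∈ V, ∀ u ∈ V, v ≠ u → ∃! i, ∃ b, v i = some b ∧ u i = some (!b)) ∧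
  (∀ v ∈ V, ∀ u ∈ V, v ≠ u → wProp v ≠ wProp u)

/-!
Two words of such a family always share a non-star position (where they conflict), and at
every shared position they carry opposite bits. Three bits cannot be pairwise opposite, so no
position is shared by three words. Hence the words other than a fixed `v` meet the two
non-star positions of `v` at pairwise distinct positions: there are at most two of them.
Conversely `00*, *10, 1*1`, padded with stars, is such a family.
-/

lemma mem_wProp_of_eq_some {n : ℕ} {v : Fin n → Option Bool} {i : Fin n} {b : Bool}
    (h : v i = some b) : i ∈ wProp v := by
  simp [wProp, h]

lemma Finset.eq_pair_of_card_eq_two {α : Type*} [DecidableEq α] {s : Finset α} (hs : #s = 2)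
    {a b : α} (ha : a ∈ s) (hb : b ∈ s) (hab : a ≠ b) : s = {a, b} :=
  (eq_of_subset_of_card_le (by simp [insert_subset_iff, ha, hb]) (by rw [hs, card_pair hab])).symm

namespace Alpha

variable {n : ℕ} {V : Finset (Fin n → Option Bool)} {u v w : Fin n → Option Bool}

/-- Two distinct supports of size two share at most one position, so a shared position is
the conflict position given by (α₂). -/
lemma opposite_of_mem_wProp (h : Alpha 2 V) (hv : v ∈ V) (hu : u ∈ V) (hne : v ≠ u)
    {q : Fin n} (hqv : q ∈ wProp v) (hqu : q ∈ wProp u) :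
    ∃ b, v q = some b ∧ u q = some !b := by
  obtain ⟨i, ⟨b, hvi, hui⟩, -⟩ := h.2.1 v hv u hu hne
  by_cases hqi : q = i
  · exact hqi ▸ ⟨b, hvi, hui⟩
  · refine absurd ?_ (h.2.2 v hv u hu hne)
    rw [eq_pair_of_card_eq_two (h.1 v hv) hqv (mem_wProp_of_eq_some hvi) hqi,
      eq_pair_of_card_eq_two (h.1 u hu) hqu (mem_wProp_of_eq_some hui) hqi]

lemma not_mem_three_wProp (h : Alpha 2 V) (hu : u ∈ V) (hv : v ∈ V) (hw : w ∈ V)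
    (huv : u ≠ v) (huw : u ≠ w) (hvw : v ≠ w) (q : Fin n) :
    ¬(q ∈ wProp u ∧ q ∈ wProp v ∧ q ∈ wProp w) := by
  rintro ⟨hqu, hqv, hqw⟩
  obtain ⟨b, hub, hvb⟩ := h.opposite_of_mem_wProp hu hv huv hqu hqv
  obtain ⟨c, huc, hwc⟩ := h.opposite_of_mem_wProp hu hw huw hqu hqw
  obtain ⟨d, hvd, hwd⟩ := h.opposite_of_mem_wProp hv hw hvw hqv hqw
  grind

lemma card_le_three (h : Alpha 2 V) : #V ≤ 3 := by
  rcases V.eq_empty_or_nonempty with rfl | ⟨v, hv⟩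
  · simp
  have : #(V.erase v) ≤ #(wProp v) := by
    refine card_le_card_of_forall_subsingleton (fun u q => q ∈ wProp u) (fun u hu => ?_)
      fun q hq u₁ ⟨hu₁, hqu₁⟩ u₂ ⟨hu₂, hqu₂⟩ => ?_
    · obtain ⟨hne, hu⟩ := mem_erase.mp hu
      obtain ⟨i, ⟨b, hvi, hui⟩, -⟩ := h.2.1 v hv u hu hne.symm
      exact ⟨i, mem_wProp_of_eq_some hvi, mem_wProp_of_eq_some hui⟩
    · obtain ⟨hne₁, hu₁⟩ := mem_erase.mp hu₁
      obtain ⟨hne₂, hu₂⟩ := mem_erase.mp hu₂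
      by_contra hne
      exact h.not_mem_three_wProp hv hu₁ hu₂ (Ne.symm hne₁) (Ne.symm hne₂) hne q
        ⟨hq, hqu₁, hqu₂⟩
  rw [← card_erase_add_one hv]
  have := h.1 v hv
  omega

end Alpha

noncomputable def padStar {m n : ℕ} (e : Fin m ↪ Fin n) (w : Fin m → Option Bool) :
    Fin n → Option Bool :=
  Function.extend e w fun _ => none

section padStar

variable {m n : ℕ} (e : Fin m ↪ Fin n)

@[simp]
lemma padStar_apply_embedding (w : Fin m → Option Bool) (j : Fin m) : padStar e w (e j) = w j :=
  e.injective.extend_apply _ _ j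

lemma exists_eq_of_padStar_ne_none {w : Fin m → Option Bool} {i : Fin n}
    (h : padStar e w i ≠ none) : ∃ j, e j = i := by
  by_contra hi
  exact h (Function.extend_apply' _ _ i hi)

lemma padStar_injective : Function.Injective (padStar e) := fun v w h =>
  funext fun j => by simpa using congrFun h (e j)

lemma wProp_padStar (w : Fin m → Option Bool) : wProp (padStar e w) = (wProp w).map e := by
  ext i
  constructor
  · intro hi
    obtain ⟨j, rfl⟩ := exists_eq_of_padStar_ne_none e (by simpa [wProp] using hi)
    simpa [wProp] using hi
  · simp only [mem_map, wProp, mem_filter, mem_univ, true_and]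
    rintro ⟨j, hj, rfl⟩
    simpa using hj

lemma Alpha.map_padStar {k : ℕ} {V : Finset (Fin m → Option Bool)} (h : Alpha k V) :
    Alpha k (V.map ⟨padStar e, padStar_injective e⟩) := by
  obtain ⟨hcard, hconf, hsupp⟩ := h
  simp only [Alpha, mem_map, Function.Embedding.coeFn_mk, forall_exists_index, and_imp,
    forall_apply_eq_imp_iff₂, wProp_padStar, card_map]
  refine ⟨hcard, fun v hv u hu hne => ?_, fun v hv u hu hne => ?_⟩
  · obtain ⟨j, hj, huniq⟩ := hconf v hv u hu (ne_of_apply_ne _ hne)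
    refine ⟨e j, by simpa using hj, fun i ⟨b, hvi, hui⟩ => ?_⟩
    obtain ⟨j', rfl⟩ := exists_eq_of_padStar_ne_none e (w := v) (i := i) (by simp [hvi])
    simp only [padStar_apply_embedding] at hvi hui
    rw [huniq j' ⟨b, hvi, hui⟩]
  · exact fun hmap => hsupp v hv u hu (ne_of_apply_ne _ hne) (map_injective e hmap)

end padStar

lemma alpha_two_example : Alpha 2 ({![some false, some false, none],
    ![none, some true, some false], ![some true, none, some true]} : Finset (Fin 3 → Option Bool)) := by
  -- `∃!` has no `Decidable` instance; unfolded, it is a quantifier over `Fin 3`.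
  refine ⟨?_, ?_, ?_⟩ <;> simp only [wProp, ExistsUnique] <;> decide

theorem stmt5 (n : ℕ) (hn : 3 ≤ n) (V : Finset (Fin n → Option Bool))
    (h : Alpha 2 V) :
    V.card ≤ 3 ∧ ∃ W : Finset (Fin n → Option Bool), Alpha 2 W ∧ W.card = 3 :=
  ⟨h.card_le_three, _, alpha_two_example.map_padStar (Fin.castLEEmb hn), by rw [card_map]; decide⟩
end

section
/- For every k ≥ 2 there exist n and a set W of words of length n over {0,1,*} satisfying conditions (α₁–α₃) with parameter k such that |W| = (3/4)·2^k = 3·2^{k−2}. -/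
open Finset

/-!
Each word of `W` is copied into a word of length `2n + 1` in two ways: `w *ⁿ 0` and `*ⁿ w 1`.
Two copies of the same kind conflict exactly where the original words do, since the other block
is all stars in both and the last letters agree; copies of different kinds never conflict in the
first two blocks, because one of them is a star there, and conflict in the last letter. Their sets
of non-star positions differ because only a left copy has one in the first block.
-/

namespace Fin

variable {m n : ℕ}

theorem existsUnique_of_castAdd {p : Fin (m + n) → Prop} (h : ∃! i, p (castAdd n i))
    (h' : ∀ j, ¬ p (natAdd m j)) : ∃! i, p i := by
  obtain ⟨i, hi, huniq⟩ := h
  refine ⟨castAdd n i, hi, fun x hx => ?_⟩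
  induction x using Fin.addCases with
  | left j => rw [huniq j hx]
  | right j => exact absurd hx (h' j)

theorem existsUnique_of_natAdd {p : Fin (m + n) → Prop} (h : ∀ i, ¬ p (castAdd n i))
    (h' : ∃! j, p (natAdd m j)) : ∃! i, p i := by
  obtain ⟨j, hj, huniq⟩ := h'
  refine ⟨natAdd m j, hj, fun x hx => ?_⟩
  induction x using Fin.addCases with
  | left i => exact absurd hx (h i)
  | right i => rw [huniq i hx]

theorem append_inj_iff {α : Sort*} {a a' : Fin m → α} {b b' : Fin n → α} :
    append a b = append a' b' ↔ a = a' ∧ b = b' := by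
  simp only [funext_iff, forall_fin_add, append_left, append_right]

end Fin

section Words

variable {m n : ℕ}

theorem mem_wProp {v : Fin n → Option Bool} {i : Fin n} : i ∈ wProp v ↔ v i ≠ none := by
  simp [wProp]

@[simp]
theorem wProp_stars : wProp (fun _ : Fin n => (none : Option Bool)) = ∅ := by
  simp [wProp]

theorem card_wProp_append (a : Fin m → Option Bool) (b : Fin n → Option Bool) :
    (wProp (Fin.append a b)).card = (wProp a).card + (wProp b).card := by
  simp only [wProp, card_filter, Fin.sum_univ_add, Fin.append_left, Fin.append_right]

theorem wProp_append_eq_iff {a a' : Fin m → Option Bool} {b b' : Fin n → Option Bool} :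
    wProp (Fin.append a b) = wProp (Fin.append a' b') ↔
      wProp a = wProp a' ∧ wProp b = wProp b' := by
  simp only [Finset.ext_iff, Fin.forall_fin_add, mem_wProp, Fin.append_left, Fin.append_right]

def Conflict {ι : Type*} (v u : ι → Option Bool) (i : ι) : Prop :=
  ∃ b, v i = some b ∧ u i = some !b

theorem conflict_comm {ι : Type*} {v u : ι → Option Bool} {i : ι} :
    Conflict v u i ↔ Conflict u v i := by
  constructor <;> rintro ⟨b, hv, hu⟩ <;> exact ⟨!b, hu, by simpa using hv⟩

@[simp]
theorem conflict_append_castAdd {a a' : Fin m → Option Bool} {b b' : Fin n → Option Bool}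
    {i : Fin m} :
    Conflict (Fin.append a b) (Fin.append a' b') (Fin.castAdd n i) ↔ Conflict a a' i := by
  simp [Conflict]

@[simp]
theorem conflict_append_natAdd {a a' : Fin m → Option Bool} {b b' : Fin n → Option Bool}
    {i : Fin n} :
    Conflict (Fin.append a b) (Fin.append a' b') (Fin.natAdd m i) ↔ Conflict b b' i := by
  simp [Conflict]

@[simp]
theorem conflict_append_addNat {a a' b b' : Fin n → Option Bool} {i : Fin n} :
    Conflict (Fin.append a b) (Fin.append a' b') (i.addNat n) ↔ Conflict b b' i := by
  rw [← Fin.natAdd_eq_addNat, conflict_append_natAdd]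

@[simp]
theorem not_conflict_stars_left {ι : Type*} {u : ι → Option Bool} {i : ι} :
    ¬ Conflict (fun _ => none) u i := by
  simp [Conflict]

@[simp]
theorem not_conflict_stars_right {ι : Type*} {v : ι → Option Bool} {i : ι} :
    ¬ Conflict v (fun _ => none) i := by
  simp [Conflict]

@[simp]
theorem conflict_const {ι : Type*} {b b' : Bool} {i : ι} :
    Conflict (fun _ => some b) (fun _ => some b') i ↔ b' = !b := by
  simp [Conflict]

/-- `w *ⁿ 0` -/
def leftCopy (w : Fin n → Option Bool) : Fin (n + n + 1) → Option Bool :=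
  Fin.append (Fin.append w fun _ => none) fun _ => some false

/-- `*ⁿ w 1` -/
def rightCopy (w : Fin n → Option Bool) : Fin (n + n + 1) → Option Bool :=
  Fin.append (Fin.append (fun _ => none) w) fun _ => some true

end Words

section Copies

variable {n : ℕ} {w w' : Fin n → Option Bool}

theorem existsUnique_conflict_leftCopy (h : ∃! i, Conflict w w' i) :
    ∃! i, Conflict (leftCopy w) (leftCopy w') i :=
  Fin.existsUnique_of_castAdd
    (Fin.existsUnique_of_castAdd (by simpa [leftCopy] using h) (by simp [leftCopy]))
    (by simp [leftCopy])

theorem existsUnique_conflict_rightCopy (h : ∃! i, Conflict w w' i) :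
    ∃! i, Conflict (rightCopy w) (rightCopy w') i :=
  Fin.existsUnique_of_castAdd
    (Fin.existsUnique_of_natAdd (by simp [rightCopy]) (by simpa [rightCopy] using h))
    (by simp [rightCopy])

theorem existsUnique_conflict_leftCopy_rightCopy :
    ∃! i, Conflict (leftCopy w) (rightCopy w') i := by
  refine Fin.existsUnique_of_natAdd (fun i => ?_) ⟨0, ?_, fun _ _ => Subsingleton.elim _ _⟩
  · induction i using Fin.addCases <;> simp [leftCopy, rightCopy]
  · simp [leftCopy, rightCopy]

theorem existsUnique_conflict_rightCopy_leftCopy :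
    ∃! i, Conflict (rightCopy w) (leftCopy w') i := by
  simpa only [conflict_comm] using existsUnique_conflict_leftCopy_rightCopy

theorem card_wProp_leftCopy : (wProp (leftCopy w)).card = (wProp w).card + 1 := by
  rw [leftCopy, card_wProp_append, card_wProp_append]
  simp [wProp]

theorem card_wProp_rightCopy : (wProp (rightCopy w)).card = (wProp w).card + 1 := by
  rw [rightCopy, card_wProp_append, card_wProp_append]
  simp [wProp]

theorem wProp_leftCopy_eq_iff :
    wProp (leftCopy w) = wProp (leftCopy w') ↔ wProp w = wProp w' := by
  simp [leftCopy, wProp_append_eq_iff]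

theorem wProp_rightCopy_eq_iff :
    wProp (rightCopy w) = wProp (rightCopy w') ↔ wProp w = wProp w' := by
  simp [rightCopy, wProp_append_eq_iff]

theorem wProp_leftCopy_ne_rightCopy (hw : (wProp w).Nonempty) :
    wProp (leftCopy w) ≠ wProp (rightCopy w') := by
  simp [leftCopy, rightCopy, wProp_append_eq_iff, hw.ne_empty]

theorem leftCopy_injective : Function.Injective (leftCopy (n := n)) := by
  intro w w' h
  simpa [leftCopy, Fin.append_inj_iff] using h

theorem rightCopy_injective : Function.Injective (rightCopy (n := n)) := by
  intro w w' h
  simpa [rightCopy, Fin.append_inj_iff] using h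

theorem leftCopy_ne_rightCopy : leftCopy w ≠ rightCopy w' := by
  intro h
  simpa [leftCopy, rightCopy] using congrFun h (Fin.natAdd _ 0)

end Copies

def doubling {n : ℕ} (W : Finset (Fin n → Option Bool)) :
    Finset (Fin (n + n + 1) → Option Bool) :=
  W.image leftCopy ∪ W.image rightCopy

theorem mem_doubling {n : ℕ} {W : Finset (Fin n → Option Bool)}
    {v : Fin (n + n + 1) → Option Bool} :
    v ∈ doubling W ↔ (∃ w ∈ W, leftCopy w = v) ∨ ∃ w ∈ W, rightCopy w = v := by
  simp [doubling]

theorem card_doubling {n : ℕ} (W : Finset (Fin n → Option Bool)) :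
    (doubling W).card = 2 * W.card := by
  rw [doubling, card_union_of_disjoint, card_image_of_injective _ leftCopy_injective,
    card_image_of_injective _ rightCopy_injective, two_mul]
  simp only [disjoint_left, mem_image]
  rintro _ ⟨w, -, rfl⟩ ⟨w', -, h⟩
  exact leftCopy_ne_rightCopy h.symm

theorem alpha_doubling {n k : ℕ} {W : Finset (Fin n → Option Bool)} (h : Alpha k W)
    (hk : k ≠ 0) :
    Alpha (k + 1) (doubling W) := by
  obtain ⟨hcard, hconf, hsupp⟩ := h
  have hne : ∀ w ∈ W, (wProp w).Nonempty := fun w hw => card_pos.mp (by grind)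
  refine ⟨fun v hv => ?_, fun v hv u hu hvu => ?_, fun v hv u hu hvu => ?_⟩
  · rcases mem_doubling.mp hv with ⟨w, hw, rfl⟩ | ⟨w, hw, rfl⟩
    · rw [card_wProp_leftCopy, hcard w hw]
    · rw [card_wProp_rightCopy, hcard w hw]
  all_goals
    rcases mem_doubling.mp hv with ⟨w, hw, rfl⟩ | ⟨w, hw, rfl⟩ <;>
      rcases mem_doubling.mp hu with ⟨w', hw', rfl⟩ | ⟨w', hw', rfl⟩
  · exact existsUnique_conflict_leftCopy (hconf w hw w' hw' (ne_of_apply_ne _ hvu))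
  · exact existsUnique_conflict_leftCopy_rightCopy
  · exact existsUnique_conflict_rightCopy_leftCopy
  · exact existsUnique_conflict_rightCopy (hconf w hw w' hw' (ne_of_apply_ne _ hvu))
  · exact wProp_leftCopy_eq_iff.not.mpr (hsupp w hw w' hw' (ne_of_apply_ne _ hvu))
  · exact wProp_leftCopy_ne_rightCopy (hne w hw)
  · exact (wProp_leftCopy_ne_rightCopy (hne w' hw')).symm
  · exact wProp_rightCopy_eq_iff.not.mpr (hsupp w hw w' hw' (ne_of_apply_ne _ hvu))

/-- The words `00*`, `*10`, `1*1`. -/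
def baseWords : Finset (Fin 3 → Option Bool) :=
  {![some false, some false, none], ![none, some true, some false],
    ![some true, none, some true]}

theorem alpha_baseWords : Alpha 2 baseWords := by
  refine ⟨by decide, ?_, by decide⟩
  unfold ExistsUnique
  decide

theorem card_baseWords : baseWords.card = 3 := by decide

theorem stmt11 (k : ℕ) (hk : 2 ≤ k) :
    ∃ n : ℕ, ∃ W : Finset (Fin n → Option Bool),
      Alpha k W ∧ W.card = 3 * 2 ^ (k - 2) := by
  induction k, hk using Nat.le_induction with
  | base => exact ⟨3, baseWords, alpha_baseWords, card_baseWords⟩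
  | succ k hk ih =>
    obtain ⟨n, W, hW, hcard⟩ := ih
    refine ⟨n + n + 1, doubling W, alpha_doubling hW (by omega), ?_⟩
    rw [card_doubling, hcard, show k + 1 - 2 = k - 2 + 1 by omega, pow_succ]
    ring
end

section
/- Let 3 ≤ k < n and let V satisfy conditions (α₁–α₃). If there exists a coordinate i such that |V^{i0}| ≠ |V^{i1}|, where V^{iε} = {v ∈ V : vᵢ = ε}, then |V| ≤ 2^k − 2. -/
open Finset

/-
Pairwise conflicting words are pairwise disjoint boxes, so the union of the boxes of `V` has
Walsh coefficients `2^(n-k) N(S)` with `N(S) = ∑_{v ∈ V, S ⊆ wProp v} ± 1`, and Parseval gives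
`∑_S N(S)² = 2^k |V|`. The term `S = ∅` contributes `|V|²`, each `S = wProp v` contributes `1`
(by (α₃) no other word has `S` among its non-star positions), and `S = {i}` contributes
`(|V^{i0}| - |V^{i1}|)² ≥ 1`. Hence `|V|² + |V| < 2^k |V|`, that is `|V| ≤ 2^k - 2`.
-/

def boolSign (b : Bool) : ℤ := if b then -1 else 1

def walsh {n : ℕ} (S : Finset (Fin n)) (x : Fin n → Bool) : ℤ :=
  ∏ j ∈ S, boolSign (x j)

section Walsh

variable {n : ℕ}

theorem sum_walsh_mul_walsh (x y : Fin n → Bool) :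
    ∑ S, walsh S x * walsh S y = if x = y then 2 ^ n else 0 := by
  have hcoord (a b : Bool) : boolSign a * boolSign b + 1 = if a = b then 2 else 0 := by
    cases a <;> cases b <;> rfl
  simp_rw [walsh, ← prod_mul_distrib, ← powerset_univ, ← prod_add_one, hcoord,
    Fintype.prod_ite_zero, prod_const, card_univ, Fintype.card_fin, funext_iff]

theorem sum_sq_sum_walsh (U : Finset (Fin n → Bool)) :
    ∑ S, (∑ x ∈ U, walsh S x) ^ 2 = 2 ^ n * #U := by
  calc ∑ S, (∑ x ∈ U, walsh S x) ^ 2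
      = ∑ x ∈ U, ∑ y ∈ U, ∑ S, walsh S x * walsh S y := by
        simp_rw [sq, sum_mul_sum]
        rw [sum_comm]
        exact sum_congr rfl fun x _ => sum_comm
    _ = 2 ^ n * #U := by
        simp_rw [sum_walsh_mul_walsh]
        simp [mul_comm]

end Walsh

-- `none ↦ 0` makes `wordSign S v` vanish unless `S ⊆ wProp v`.
def letterSign : Option Bool → ℤ
  | none => 0
  | some b => boolSign b

def wordSign {n : ℕ} (S : Finset (Fin n)) (v : Fin n → Option Bool) : ℤ :=
  ∏ j ∈ S, letterSign (v j)

open Classical in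
noncomputable def wordBox {n : ℕ} (v : Fin n → Option Bool) : Finset (Fin n → Bool) :=
  univ.filter (inBox · v)

def letterSet : Option Bool → Finset Bool
  | none => univ
  | some b => {b}

section Box

variable {n : ℕ}

theorem mem_wordBox {v : Fin n → Option Bool} {x : Fin n → Bool} :
    x ∈ wordBox v ↔ inBox x v := by
  simp [wordBox]

theorem wordBox_eq_piFinset (v : Fin n → Option Bool) :
    wordBox v = Fintype.piFinset fun j => letterSet (v j) := by
  ext x
  simp only [mem_wordBox, inBox, Fintype.mem_piFinset]
  refine forall_congr' fun j => ?_
  generalize v j = o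
  cases o <;> simp [letterSet]

theorem sum_walsh_wordBox (S : Finset (Fin n)) (v : Fin n → Option Bool) :
    ∑ x ∈ wordBox v, walsh S x = 2 ^ #(wProp v)ᶜ * wordSign S v := by
  have hcoord (o : Option Bool) (p : Prop) [Decidable p] :
      ∑ b ∈ letterSet o, (if p then boolSign b else 1)
        = (if o = none then 2 else 1) * (if p then letterSign o else 1) := by
    rcases o with _ | _ | _ <;> by_cases p <;> simp [*, letterSet, letterSign, boolSign]
  have hstars : (wProp v)ᶜ = univ.filter (fun j => v j = none) := by
    ext; simp [wProp]
  calc ∑ x ∈ wordBox v, walsh S x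
      = ∑ x ∈ wordBox v, ∏ j, if j ∈ S then boolSign (x j) else 1 := by
        simp [walsh, prod_ite_mem]
    _ = ∏ j, ∑ b ∈ letterSet (v j), if j ∈ S then boolSign b else 1 := by
        rw [wordBox_eq_piFinset, prod_univ_sum]
    _ = (∏ j, if v j = none then 2 else 1) * ∏ j, if j ∈ S then letterSign (v j) else 1 := by
        simp_rw [hcoord, prod_mul_distrib]
    _ = 2 ^ #(wProp v)ᶜ * wordSign S v := by
        rw [prod_ite, prod_const, prod_const_one, mul_one, ← hstars, prod_ite_mem, univ_inter]
        rfl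

theorem disjoint_wordBox {v u : Fin n → Option Bool} {i : Fin n} {b : Bool}
    (hv : v i = some b) (hu : u i = some !b) : Disjoint (wordBox v) (wordBox u) := by
  refine disjoint_left.2 fun x hxv hxu => ?_
  have hx := mem_wordBox.1 hxv i b hv
  have hx' := mem_wordBox.1 hxu i _ hu
  cases b <;> simp_all

theorem pairwiseDisjoint_wordBox {V : Finset (Fin n → Option Bool)}
    (hconf : ∀ v ∈ V, ∀ u ∈ V, v ≠ u → ∃ i b, v i = some b ∧ u i = some !b) :
    (V : Set (Fin n → Option Bool)).PairwiseDisjoint wordBox := by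
  intro v hv u hu hvu
  obtain ⟨i, b, hvi, hui⟩ := hconf v hv u hu hvu
  exact disjoint_wordBox hvi hui

end Box

-- The Walsh coefficient at `S` of the union of the boxes of `V`, divided by `2^(n-k)`.
def walshCoeff {n : ℕ} (V : Finset (Fin n → Option Bool)) (S : Finset (Fin n)) : ℤ :=
  ∑ v ∈ V, wordSign S v

section Coeff

variable {n k : ℕ} {V : Finset (Fin n → Option Bool)}

theorem walshCoeff_empty (V : Finset (Fin n → Option Bool)) : walshCoeff V ∅ = #V := by
  simp [walshCoeff, wordSign]

theorem sum_walsh_biUnion_wordBox (hcard : ∀ v ∈ V, #(wProp v) = k)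
    (hdisj : (V : Set (Fin n → Option Bool)).PairwiseDisjoint wordBox) (S : Finset (Fin n)) :
    ∑ x ∈ V.biUnion wordBox, walsh S x = 2 ^ (n - k) * walshCoeff V S := by
  rw [sum_biUnion hdisj, walshCoeff, mul_sum]
  refine sum_congr rfl fun v hv => ?_
  rw [sum_walsh_wordBox, card_compl, Fintype.card_fin, hcard v hv]

theorem sum_sq_walshCoeff (hcard : ∀ v ∈ V, #(wProp v) = k)
    (hdisj : (V : Set (Fin n → Option Bool)).PairwiseDisjoint wordBox) :
    ∑ S, walshCoeff V S ^ 2 = 2 ^ k * #V := by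
  rcases V.eq_empty_or_nonempty with rfl | ⟨v, hv⟩
  · simp [walshCoeff]
  have hkn : k ≤ n := hcard v hv ▸ (card_le_univ (wProp v)).trans_eq (Fintype.card_fin n)
  have hunion : (#(V.biUnion wordBox) : ℤ) = 2 ^ (n - k) * #V := by
    rw [← walshCoeff_empty, ← sum_walsh_biUnion_wordBox hcard hdisj]
    simp [walsh]
  have hparseval := sum_sq_sum_walsh (V.biUnion wordBox)
  simp_rw [sum_walsh_biUnion_wordBox hcard hdisj, mul_pow, ← mul_sum, hunion] at hparseval
  rw [show (2 : ℤ) ^ n = 2 ^ (n - k) * 2 ^ k by rw [← pow_add, Nat.sub_add_cancel hkn]]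
    at hparseval
  refine mul_left_cancel₀ (pow_ne_zero 2 (pow_ne_zero (n - k) two_ne_zero)) ?_
  rw [hparseval]
  ring

theorem wordSign_eq_zero_of_not_subset {S : Finset (Fin n)} {v : Fin n → Option Bool}
    (h : ¬S ⊆ wProp v) : wordSign S v = 0 := by
  obtain ⟨j, hjS, hj⟩ := not_subset.1 h
  simp only [wProp, mem_filter, mem_univ, true_and, not_not] at hj
  exact prod_eq_zero hjS (by rw [hj]; rfl)

theorem sq_wordSign_of_subset {S : Finset (Fin n)} {v : Fin n → Option Bool}
    (h : S ⊆ wProp v) : wordSign S v ^ 2 = 1 := by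
  rw [wordSign, ← prod_pow]
  refine prod_eq_one fun j hj => ?_
  obtain ⟨b, hb⟩ := Option.ne_none_iff_exists'.1 (by simpa [wProp] using h hj)
  cases b <;> simp [hb, letterSign, boolSign]

theorem walshCoeff_wProp (hcard : ∀ v ∈ V, #(wProp v) = k)
    (hinj : ∀ v ∈ V, ∀ u ∈ V, v ≠ u → wProp v ≠ wProp u) {v : Fin n → Option Bool}
    (hv : v ∈ V) : walshCoeff V (wProp v) = wordSign (wProp v) v := by
  refine sum_eq_single_of_mem v hv fun u hu huv =>
    wordSign_eq_zero_of_not_subset fun hsub => hinj u hu v hv huv ?_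
  exact (eq_of_subset_of_card_le hsub (by rw [hcard v hv, hcard u hu])).symm

theorem walshCoeff_singleton (V : Finset (Fin n → Option Bool)) (i : Fin n) :
    walshCoeff V {i} =
      #(V.filter fun v => v i = some false) - #(V.filter fun v => v i = some true) := by
  have hsign (o : Option Bool) :
      letterSign o = (if o = some false then 1 else 0) - (if o = some true then 1 else 0) := by
    rcases o with _ | _ | _ <;> rfl
  simp_rw [walshCoeff, wordSign, prod_singleton, hsign, sum_sub_distrib, sum_boole]

theorem sq_card_add_card_lt_sum_sq_walshCoeff (hk : 2 ≤ k)
    (hcard : ∀ v ∈ V, #(wProp v) = k) (hinj : ∀ v ∈ V, ∀ u ∈ V, v ≠ u → wProp v ≠ wProp u)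
    {i : Fin n} (hi : walshCoeff V {i} ≠ 0) :
    (#V : ℤ) ^ 2 + #V < ∑ S, walshCoeff V S ^ 2 := by
  have hempty : ∅ ∉ insert {i} (V.image wProp) := by
    simp only [mem_insert, mem_image, not_or, not_exists, not_and]
    refine ⟨(singleton_ne_empty i).symm, fun v hv he => ?_⟩
    have := hcard v hv
    rw [he, card_empty] at this
    omega
  have hsingle : {i} ∉ V.image wProp := by
    simp only [mem_image, not_exists, not_and]
    intro v hv he
    have := hcard v hv
    rw [he, card_singleton] at this
    omega
  have hsupports : ∑ T ∈ V.image wProp, walshCoeff V T ^ 2 = #V := by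
    rw [sum_image fun v hv u hu he => by_contra fun hvu => hinj v hv u hu hvu he]
    rw [sum_congr rfl fun v hv => by
      rw [walshCoeff_wProp hcard hinj hv, sq_wordSign_of_subset subset_rfl]]
    simp
  calc (#V : ℤ) ^ 2 + #V
      < walshCoeff V ∅ ^ 2 +
          (walshCoeff V {i} ^ 2 + ∑ T ∈ V.image wProp, walshCoeff V T ^ 2) := by
        rw [walshCoeff_empty, hsupports]
        have : 0 < walshCoeff V {i} ^ 2 := by positivity
        linarith
    _ = ∑ S ∈ insert ∅ (insert {i} (V.image wProp)), walshCoeff V S ^ 2 := by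
        rw [sum_insert hempty, sum_insert hsingle]
    _ ≤ ∑ S, walshCoeff V S ^ 2 := sum_le_univ_sum_of_nonneg fun S => sq_nonneg _

end Coeff

theorem stmt13_general (n k : ℕ) (hk : 3 ≤ k)
    (V : Finset (Fin n → Option Bool)) (h : Alpha k V) (i : Fin n)
    (hne : (V.filter (fun v => v i = some false)).card ≠
           (V.filter (fun v => v i = some true)).card) :
    V.card ≤ 2 ^ k - 2 := by
  obtain ⟨hcard, hconf, hinj⟩ := h
  have hdisj := pairwiseDisjoint_wordBox fun v hv u hu hvu => (hconf v hv u hu hvu).exists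
  have hi : walshCoeff V {i} ≠ 0 := by
    rw [walshCoeff_singleton]
    exact sub_ne_zero.2 (by exact_mod_cast hne)
  have hlt := sq_card_add_card_lt_sum_sq_walshCoeff (by omega) hcard hinj hi
  rw [sum_sq_walshCoeff hcard hdisj, sq, ← add_one_mul] at hlt
  have : #V + 1 < 2 ^ k := by exact_mod_cast lt_of_mul_lt_mul_right hlt (Nat.cast_nonneg _)
  omega

theorem stmt13 (n k : ℕ) (hk : 3 ≤ k) (hkn : k < n)
    (V : Finset (Fin n → Option Bool)) (h : Alpha k V) (i : Fin n)
    (hne : (V.filter (fun v => v i = some false)).card ≠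
           (V.filter (fun v => v i = some true)).card) :
    V.card ≤ 2 ^ k - 2 :=
  stmt13_general n k hk V h i hne
end

section
/- Let 3 ≤ k < n, let V satisfy (α₁–α₃), and suppose the word u = 0^k *^{n−k} belongs to V. For each word δ ∈ {0,1}^{n−k}, consider the subcube *^k δ = {x ∈ {0,1}ⁿ : x_{k+1}⋯x_n = δ}, which has 2^k elements. Then the point 0^k δ belongs to u, and the family B^δ = {v ∩ *^k δ : v ∈ V, v ∩ *^k δ ≠ ∅} of boxes does not cover *^k δ; moreover there exists a point w^δ ∈ *^k δ uncovered by V whose number of 1's among its first k coordinates is odd. -/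
/-!
Call a point of the subcube `*^k δ` odd or even according to the parity of its number of ones
among the first `k` coordinates. Flipping the first coordinate matches odd and even points, so
there are as many of each. The box `u = 0^k *^{n-k}` meets `*^k δ` only in the even point
`0^k δ`, and every other word of `V` has a star among the first `k` positions (its prop set has
`k` elements and differs from that of `u`). If every odd point lay in some box `v ∈ V`, flipping
it at a star of `v` would send it to an even point of `v`, hence different from `0^k δ`; since
the boxes are pairwise disjoint this map is injective, so there would be fewer odd points than
even ones.
-/

open Finset

section Parity

variable {ι : Type*} [DecidableEq ι]

def flipAt (j : ι) (x : ι → Bool) : ι → Bool :=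
  Function.update x j (!x j)

@[simp]
lemma flipAt_apply_self (j : ι) (x : ι → Bool) : flipAt j x j = !x j :=
  Function.update_self _ _ _

lemma flipAt_apply_of_ne {i j : ι} (h : i ≠ j) (x : ι → Bool) : flipAt j x i = x i :=
  Function.update_of_ne h _ _

lemma flipAt_involutive (j : ι) : Function.Involutive (flipAt j) := by
  intro x
  funext i
  by_cases h : i = j
  · subst h
    simp
  · simp only [flipAt_apply_of_ne h]

variable [Fintype ι] (p : ι → Prop) [DecidablePred p]

def OddWeightOn (x : ι → Bool) : Prop :=
  Odd #{i | p i ∧ x i = true}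

instance : DecidablePred (OddWeightOn p) :=
  fun _ => inferInstanceAs (Decidable (Odd _))

lemma oddWeightOn_flipAt {j : ι} (hj : p j) (x : ι → Bool) :
    OddWeightOn p (flipAt j x) ↔ ¬ OddWeightOn p x := by
  unfold OddWeightOn
  set B : Finset ι := {i | p i ∧ x i = true}
  cases hx : x j
  · have hflip : ({i | p i ∧ flipAt j x i = true} : Finset ι) = insert j B := by
      ext i
      by_cases hij : i = j
      · subst hij
        simp [B, hj, hx]
      · simp [B, hij, flipAt_apply_of_ne hij]
    rw [hflip, card_insert_of_notMem (by simp [B, hx]), Nat.odd_add_one]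
  · have hflip : ({i | p i ∧ flipAt j x i = true} : Finset ι) = B.erase j := by
      ext i
      by_cases hij : i = j
      · subst hij
        simp [B, hx]
      · simp [B, hij, flipAt_apply_of_ne hij]
    rw [hflip, ← card_erase_add_one (s := B) (a := j) (by simp [B, hj, hx]), Nat.odd_add_one,
      not_not]

def subcube (δ : ι → Bool) : Finset (ι → Bool) :=
  {x | ∀ i, ¬ p i → x i = δ i}

variable {p}

lemma mem_subcube {δ x : ι → Bool} : x ∈ subcube p δ ↔ ∀ i, ¬ p i → x i = δ i := by
  simp [subcube]

lemma flipAt_mem_subcube {j : ι} (hj : p j) {δ x : ι → Bool} (hx : x ∈ subcube p δ) :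
    flipAt j x ∈ subcube p δ := by
  rw [mem_subcube] at hx ⊢
  intro i hi
  rw [flipAt_apply_of_ne (by rintro rfl; exact hi hj)]
  exact hx i hi

lemma card_oddWeightOn_eq_card_not_oddWeightOn {j : ι} (hj : p j) (δ : ι → Bool) :
    #{x ∈ subcube p δ | OddWeightOn p x} = #{x ∈ subcube p δ | ¬ OddWeightOn p x} := by
  refine card_nbij' (flipAt j) (flipAt j) ?_ ?_ (fun x _ => flipAt_involutive j x)
    (fun x _ => flipAt_involutive j x)
  · intro x hx
    simp only [coe_filter] at hx ⊢
    exact ⟨flipAt_mem_subcube hj hx.1, (oddWeightOn_flipAt p hj x).not.2 (not_not.2 hx.2)⟩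
  · intro x hx
    simp only [coe_filter] at hx ⊢
    exact ⟨flipAt_mem_subcube hj hx.1, (oddWeightOn_flipAt p hj x).2 hx.2⟩

end Parity

section Boxes

variable {n k : ℕ} {V : Finset (Fin n → Option Bool)}

lemma inBox_flipAt {v : Fin n → Option Bool} {x : Fin n → Bool} {j : Fin n} (hj : v j = none)
    (hx : inBox x v) : inBox (flipAt j x) v := by
  intro i b hb
  rw [flipAt_apply_of_ne (by rintro rfl; simp [hj] at hb)]
  exact hx i b hb

lemma Alpha.eq_of_inBox (h : Alpha k V) {u v : Fin n → Option Bool} (hu : u ∈ V) (hv : v ∈ V)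
    {x : Fin n → Bool} (hxu : inBox x u) (hxv : inBox x v) : u = v := by
  by_contra hne
  obtain ⟨i, ⟨b, hub, hvb⟩, -⟩ := h.2.1 u hu v hv hne
  simpa [hxu i b hub] using hxv i _ hvb

lemma Alpha.wProp_nonempty (h : Alpha k V) (hk : 0 < k) {u : Fin n → Option Bool} (hu : u ∈ V) :
    (wProp u).Nonempty := by
  rw [← card_pos, h.1 u hu]
  exact hk

lemma Alpha.exists_star_mem_wProp (h : Alpha k V) {u v : Fin n → Option Bool} (hu : u ∈ V)
    (hv : v ∈ V) (hne : v ≠ u) : ∃ j ∈ wProp u, v j = none := by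
  by_contra! hstar
  have hsub : wProp u ⊆ wProp v := fun i hi => by
    simpa [wProp] using hstar i hi
  exact h.2.2 v hv u hu hne
    (eq_of_subset_of_card_le hsub (by rw [h.1 u hu, h.1 v hv])).symm

/-- Boxes of `V` are pairwise disjoint, so a flipped point remembers the box it was flipped in. -/
lemma Alpha.injOn_flipAt_star (h : Alpha k V) {A : Set (Fin n → Bool)}
    {c : (Fin n → Bool) → Fin n → Option Bool} {J : (Fin n → Option Bool) → Fin n}
    (hc : ∀ x ∈ A, c x ∈ V ∧ inBox x (c x)) (hJ : ∀ x ∈ A, c x (J (c x)) = none) :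
    Set.InjOn (fun x => flipAt (J (c x)) x) A := by
  intro x hx y hy hxy
  replace hxy : flipAt (J (c x)) x = flipAt (J (c y)) y := hxy
  have hbox : ∀ z ∈ A, inBox (flipAt (J (c z)) z) (c z) := fun z hz =>
    inBox_flipAt (hJ z hz) (hc z hz).2
  have hcxy : c x = c y :=
    h.eq_of_inBox (hc x hx).1 (hc y hy).1 (hbox x hx) (hxy ▸ hbox y hy)
  simp only [hcxy] at hxy
  exact (flipAt_involutive _).injective hxy

variable {p : Fin n → Prop} [DecidablePred p] {u : Fin n → Option Bool} {z : Fin n → Bool}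

lemma Alpha.card_oddWeightOn_lt_of_covered (h : Alpha k V) (hk : 0 < k) (δ : Fin n → Bool)
    (hu : u ∈ V) (hp : ∀ i ∈ wProp u, p i) (hu_even : ∀ x, inBox x u → ¬ OddWeightOn p x)
    (hz : z ∈ subcube p δ) (hzu : inBox z u)
    (hcov : ∀ x ∈ subcube p δ, OddWeightOn p x → ∃ v ∈ V, inBox x v) :
    #{x ∈ subcube p δ | OddWeightOn p x} < #{x ∈ subcube p δ | ¬ OddWeightOn p x} := by
  set A := {x ∈ subcube p δ | OddWeightOn p x}
  set E := {x ∈ subcube p δ | ¬ OddWeightOn p x}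
  have hcover : ∀ x ∈ A, ∃ v ∈ V, v ≠ u ∧ inBox x v := by
    intro x hx
    simp only [A, mem_filter] at hx
    obtain ⟨v, hv, hxv⟩ := hcov x hx.1 hx.2
    exact ⟨v, hv, by rintro rfl; exact hu_even x hxv hx.2, hxv⟩
  have hstar : ∀ v ∈ V, v ≠ u → ∃ j, p j ∧ v j = none := fun v hv hne => by
    obtain ⟨j, hj, hvj⟩ := h.exists_star_mem_wProp hu hv hne
    exact ⟨j, hp j hj, hvj⟩
  have : Nonempty (Fin n) := ⟨(h.wProp_nonempty hk hu).choose⟩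
  choose! c hcV hcu hxc using hcover
  choose! J hJp hJ using hstar
  have hzE : z ∈ E := by simp [E, hz, hu_even z hzu]
  suffices #A ≤ #(E.erase z) by
    rw [card_erase_of_mem hzE] at this
    have := card_pos.2 ⟨z, hzE⟩
    omega
  refine card_le_card_of_injOn (fun x => flipAt (J (c x)) x) ?_
    (h.injOn_flipAt_star (fun x hx => ⟨hcV x hx, hxc x hx⟩)
      (fun x hx => hJ _ (hcV x hx) (hcu x hx)))
  intro x hx
  have hjp := hJp _ (hcV x hx) (hcu x hx)
  have hx' := mem_filter.1 hx
  refine mem_erase.2 ⟨fun hxz => hcu x hx (h.eq_of_inBox hu (hcV x hx) hzu ?_).symm, ?_⟩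
  · exact hxz ▸ inBox_flipAt (hJ _ (hcV x hx) (hcu x hx)) (hxc x hx)
  · exact mem_filter.2 ⟨flipAt_mem_subcube hjp hx'.1,
      (oddWeightOn_flipAt p hjp x).not.2 (not_not.2 hx'.2)⟩

lemma Alpha.exists_oddWeightOn_not_inBox (h : Alpha k V) (hk : 0 < k) (δ : Fin n → Bool)
    (hu : u ∈ V) (hp : ∀ i ∈ wProp u, p i) (hu_even : ∀ x, inBox x u → ¬ OddWeightOn p x)
    (hz : z ∈ subcube p δ) (hzu : inBox z u) :
    ∃ x ∈ subcube p δ, OddWeightOn p x ∧ ∀ v ∈ V, ¬ inBox x v := by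
  obtain ⟨j₀, hj₀⟩ := h.wProp_nonempty hk hu
  by_contra! hcov
  have hlt := h.card_oddWeightOn_lt_of_covered hk δ hu hp hu_even hz hzu hcov
  rw [card_oddWeightOn_eq_card_not_oddWeightOn (hp j₀ hj₀)] at hlt
  exact lt_irrefl _ hlt

end Boxes

theorem stmt17_general (n k : ℕ) (hk : 3 ≤ k)
    (V : Finset (Fin n → Option Bool)) (h : Alpha k V)
    (hu : (fun i : Fin n => if i.val < k then some false else (none : Option Bool)) ∈ V)
    (δ : Fin n → Bool) :
    inBox (fun i : Fin n => if i.val < k then false else δ i)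
        (fun i : Fin n => if i.val < k then some false else none) ∧
    ∃ w : Fin n → Bool, (∀ i : Fin n, k ≤ i.val → w i = δ i) ∧
      (∀ v ∈ V, ¬ inBox w v) ∧
      Odd (Finset.univ.filter (fun i : Fin n => i.val < k ∧ w i = true)).card := by
  set u : Fin n → Option Bool := fun i => if i.val < k then some false else none
  have hzu : inBox (fun i : Fin n => if i.val < k then false else δ i) u := by
    intro i b hb
    by_cases hi : i.val < k <;> simp_all [u]
  have hu_even : ∀ x, inBox x u → ¬ OddWeightOn (fun i : Fin n => i.val < k) x := by
    intro x hx
    have hzero : ({i | i.val < k ∧ x i = true} : Finset (Fin n)) = ∅ :=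
      filter_eq_empty_iff.2 fun i _ ⟨hi, hxi⟩ => by simpa [hxi] using hx i false (by simp [u, hi])
    simp [OddWeightOn, hzero]
  have hp : ∀ i ∈ wProp u, i.val < k := fun i hi => by
    by_contra hik
    simp [wProp, u, hik] at hi
  obtain ⟨w, hw, hodd, hw_out⟩ := h.exists_oddWeightOn_not_inBox (by omega) δ hu hp hu_even
    (mem_subcube.2 fun i hi => by simp [hi]) hzu
  exact ⟨hzu, w, fun i hi => mem_subcube.1 hw i (by omega), hw_out, hodd⟩

theorem stmt17 (n k : ℕ) (hk : 3 ≤ k) (hkn : k < n)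
    (V : Finset (Fin n → Option Bool)) (h : Alpha k V)
    (hu : (fun i : Fin n => if i.val < k then some false else (none : Option Bool)) ∈ V)
    (δ : Fin n → Bool) :
    inBox (fun i : Fin n => if i.val < k then false else δ i)
        (fun i : Fin n => if i.val < k then some false else none) ∧
    ∃ w : Fin n → Bool, (∀ i : Fin n, k ≤ i.val → w i = δ i) ∧
      (∀ v ∈ V, ¬ inBox w v) ∧
      Odd (Finset.univ.filter (fun i : Fin n => i.val < k ∧ w i = true)).card :=
  stmt17_general n k hk V h hu δ
end

section
/- Suppose v¹, v², v³ are words of length k over {0,1,*} (k ≥ 3) such that each vⁱ contains exactly one '1', exactly one '*' (located at position i), and '0's elsewhere, and any two of them have exactly one position s with {vⁱ_s, vʲ_s} = {0,1}. Then v¹, v², v³ restricted to the coordinates {1,2,3} form one of the two patterns {*10, 0*1, 10*} or {*01, 1*0, 01*}, and vⁱ_s = 0 for all s > 3, s ≤ k, s ≠ i. -/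
open Finset

theorem stmt18 (k : ℕ) (hk : 3 ≤ k) (w : Fin 3 → (Fin k → Option Bool))
    (hstar : ∀ a : Fin 3, w a ⟨a.val, lt_of_lt_of_le a.isLt hk⟩ = none)
    (hones : ∀ a : Fin 3,
      (Finset.univ.filter (fun s => w a s = some true)).card = 1)
    (hstars : ∀ a : Fin 3,
      (Finset.univ.filter (fun s => w a s = none)).card = 1)
    (hpair : ∀ a b : Fin 3, a ≠ b →
      ∃! s : Fin k, ∃ c : Bool, w a s = some c ∧ w b s = some (!c)) :
    ((w 0 ⟨1, lt_of_lt_of_le (by norm_num) hk⟩ = some true ∧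
      w 1 ⟨2, lt_of_lt_of_le (by norm_num) hk⟩ = some true ∧
      w 2 ⟨0, lt_of_lt_of_le (by norm_num) hk⟩ = some true) ∨
     (w 0 ⟨2, lt_of_lt_of_le (by norm_num) hk⟩ = some true ∧
      w 1 ⟨0, lt_of_lt_of_le (by norm_num) hk⟩ = some true ∧
      w 2 ⟨1, lt_of_lt_of_le (by norm_num) hk⟩ = some true)) ∧
    (∀ a : Fin 3, ∀ s : Fin k, 3 ≤ s.val → w a s = some false) := by
  classical
  have hstar' : ∀ a : Fin 3, w a (Fin.castLE hk a) = none := fun a => hstar a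
  have hp : ∀ a : Fin 3, ∃ t : Fin k, ∀ s, w a s = some true ↔ s = t := by
    intro a
    obtain ⟨t, ht⟩ := Finset.card_eq_one.mp (hones a)
    refine ⟨t, fun s => ?_⟩
    have h : s ∈ Finset.univ.filter (fun s => w a s = some true) ↔
        s ∈ ({t} : Finset (Fin k)) := by rw [ht]
    simpa using h
  choose p hpspec using hp
  have hn : ∀ (a : Fin 3) (s : Fin k), w a s = none ↔ s = Fin.castLE hk a := by
    intro a s
    obtain ⟨t, ht⟩ := Finset.card_eq_one.mp (hstars a)
    have h1 : ∀ x : Fin k, w a x = none ↔ x = t := by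
      intro x
      have h : x ∈ Finset.univ.filter (fun s => w a s = none) ↔
          x ∈ ({t} : Finset (Fin k)) := by rw [ht]
      simpa using h
    have h2 : Fin.castLE hk a = t := (h1 _).mp (hstar' a)
    rw [h1, ← h2]
  have hfalse : ∀ (a : Fin 3) (s : Fin k), s ≠ Fin.castLE hk a → s ≠ p a →
      w a s = some false := by
    intro a s h1 h2
    rcases h : w a s with _ | (_ | _)
    · exact absurd ((hn a s).mp h) h1
    · rfl
    · exact absurd ((hpspec a s).mp h) h2
  have key : ∀ a b : Fin 3, a ≠ b →
      (p a = Fin.castLE hk b ∧ p b ≠ Fin.castLE hk a) ∨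
      (p b = Fin.castLE hk a ∧ p a ≠ Fin.castLE hk b) := by
    intro a b hab
    obtain ⟨s, ⟨c, hac, hbc⟩, huniq⟩ := hpair a b hab
    by_cases h1 : p a = Fin.castLE hk b <;> by_cases h2 : p b = Fin.castLE hk a
    · exfalso
      cases c with
      | true =>
        have hsa := (hpspec a s).mp hac
        rw [hsa, h1, hstar' b] at hbc
        exact Option.some_ne_none _ hbc.symm
      | false =>
        have hsb := (hpspec b s).mp hbc
        rw [hsb, h2, hstar' a] at hac
        exact Option.some_ne_none _ hac.symm
    · exact Or.inl ⟨h1, h2⟩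
    · exact Or.inr ⟨h2, h1⟩
    · exfalso
      by_cases h3 : p a = p b
      · cases c with
        | true =>
          have hsa := (hpspec a s).mp hac
          have : w b s = some true := (hpspec b s).mpr (by rw [hsa, h3])
          rw [hbc] at this
          exact Bool.noConfusion (Option.some.inj this)
        | false =>
          have hsb := (hpspec b s).mp hbc
          have : w a s = some true := (hpspec a s).mpr (by rw [hsb, h3])
          rw [hac] at this
          exact Bool.noConfusion (Option.some.inj this)
      · have w1 : ∃ c : Bool, w a (p a) = some c ∧ w b (p a) = some (!c) :=
          ⟨true, (hpspec a _).mpr rfl, by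
            simpa using hfalse b (p a) h1 (fun h => h3 h)⟩
        have w2 : ∃ c : Bool, w a (p b) = some c ∧ w b (p b) = some (!c) :=
          ⟨false, hfalse a (p b) h2 (fun h => h3 h.symm), by
            simpa using (hpspec b (p b)).mpr rfl⟩
        exact h3 ((huniq _ w1).trans (huniq _ w2).symm)
  have ecast : ∀ a b : Fin 3, Fin.castLE hk a = Fin.castLE hk b → a = b := by
    intro a b h
    exact Fin.ext (by simpa using congrArg Fin.val h)
  have k01 := key 0 1 (by decide)
  have k02 := key 0 2 (by decide)
  have k12 := key 1 2 (by decide)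
  have hcyc : (p 0 = Fin.castLE hk 1 ∧ p 1 = Fin.castLE hk 2 ∧ p 2 = Fin.castLE hk 0) ∨
      (p 0 = Fin.castLE hk 2 ∧ p 1 = Fin.castLE hk 0 ∧ p 2 = Fin.castLE hk 1) := by
    rcases k01 with ⟨h01, h10⟩ | ⟨h10, h01⟩
    · left
      rcases k02 with ⟨h02, _⟩ | ⟨h20, _⟩
      · exact absurd (ecast 1 2 (h01.symm.trans h02)) (by decide)
      · rcases k12 with ⟨h12, _⟩ | ⟨h21, _⟩
        · exact ⟨h01, h12, h20⟩
        · exact absurd (ecast 0 1 (h20.symm.trans h21)) (by decide)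
    · right
      rcases k12 with ⟨h12, _⟩ | ⟨h21, _⟩
      · exact absurd (ecast 0 2 (h10.symm.trans h12)) (by decide)
      · rcases k02 with ⟨h02, _⟩ | ⟨h20, _⟩
        · exact ⟨h02, h10, h21⟩
        · exact absurd (ecast 1 0 (h21.symm.trans h20)) (by decide)
  have hplt : ∀ a : Fin 3, (p a).val < 3 := by
    intro a
    fin_cases a <;> rcases hcyc with ⟨h0, h1, h2⟩ | ⟨h0, h1, h2⟩ <;>
      simp_all [Fin.castLE]
  constructor
  · rcases hcyc with ⟨h0, h1, h2⟩ | ⟨h0, h1, h2⟩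
    · exact Or.inl ⟨(hpspec 0 _).mpr h0.symm, (hpspec 1 _).mpr h1.symm,
        (hpspec 2 _).mpr h2.symm⟩
    · exact Or.inr ⟨(hpspec 0 _).mpr h0.symm, (hpspec 1 _).mpr h1.symm,
        (hpspec 2 _).mpr h2.symm⟩
  · intro a s hs
    refine hfalse a s ?_ ?_
    · intro h
      have h' : s.val = a.val := congrArg Fin.val h
      have := a.isLt
      omega
    · intro h
      have h' : s.val = (p a).val := congrArg Fin.val h
      have := hplt a
      omega
end
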